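/- arXiv:1609.00973 — 2 statements merged into one kernel-verified Lean document; each statement's English description precedes it below -/
import Mathlib

section
/- If Λ is a Λ-sequence and f ∈ 𝔄, then V_Λ(f, K_f) = V_Λ(f) (equality in [0,∞]); that is, the Λ-variation of f is already attained using only partition points taken from K_f, the set consisting of 0, 1 and the points of continuity of f. -/
open Filter Set MeasureTheory
open scoped ENNReal Topology

/-- `l` is a Λ-sequence (indexed from 0, so `l 0` plays the role of `λ₁`):
a nondecreasing sequence of positive reals whose reciprocals have divergent sum. -/
def IsLambdaSeq (l : ℕ → ℝ) : Prop :=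
  Monotone l ∧ (∀ n, 0 < l n) ∧ ¬ Summable (fun n => 1 / l n)

/-- A proper Λ-sequence: additionally `λₙ → ∞`. -/
def IsProperLambdaSeq (l : ℕ → ℝ) : Prop :=
  IsLambdaSeq l ∧ Tendsto l atTop atTop

/-- The Λ-variation of `f` computed over partition points taken from `K`:
the supremum of `∑ⱼ |f(x_{j+1}) - f(x_j)| / λ_{β(j)}` over all `m`, all nondecreasing
tuples `x₁ ≤ … ≤ x_{m+1}` of points of `K` and all permutations `β` of the gaps. -/
noncomputable def lamVarOn (l : ℕ → ℝ) (f : ℝ → ℝ) (K : Set ℝ) : ℝ≥0∞ :=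
  ⨆ (m : ℕ) (x : Fin (m + 1) → ℝ) (_ : Monotone x) (_ : ∀ j, x j ∈ K)
    (β : Equiv.Perm (Fin m)),
    ∑ j : Fin m, ENNReal.ofReal (|f (x j.succ) - f (x j.castSucc)| / l (β j))

/-- The Λ-variation of `f : [0,1] → ℝ`. -/
noncomputable def lamVar (l : ℕ → ℝ) (f : ℝ → ℝ) : ℝ≥0∞ :=
  lamVarOn l f (Set.Icc 0 1)

/-- The norm `‖f‖_Λ = V_Λ(f) + |f 0|` (valued in `[0,∞]`). -/
noncomputable def lamNorm (l : ℕ → ℝ) (f : ℝ → ℝ) : ℝ≥0∞ :=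
  lamVar l f + ENNReal.ofReal |f 0|

/-- `f` is continuous in Λ-variation: `V_{Λ_(m)}(f) → 0` as `m → ∞`. -/
def ContInLamVar (l : ℕ → ℝ) (f : ℝ → ℝ) : Prop :=
  Tendsto (fun m => lamVar (fun n => l (n + m)) f) atTop (𝓝 0)

/-- The restricted Λ-variation `V_{Λ,δ}(f)`: the supremum of `∑ⱼ |f(bⱼ) - f(aⱼ)| / λⱼ`
over all finite sequences of nonoverlapping closed subintervals `[aⱼ, bⱼ]` of `[0,1]`
of length at most `δ`, listed in any order. -/
noncomputable def lamVarDelta (l : ℕ → ℝ) (δ : ℝ) (f : ℝ → ℝ) : ℝ≥0∞ :=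
  ⨆ (k : ℕ) (a : Fin k → ℝ) (b : Fin k → ℝ)
    (_ : ∀ j, 0 ≤ a j ∧ a j ≤ b j ∧ b j ≤ 1 ∧ b j - a j ≤ δ)
    (_ : ∀ i j, i ≠ j → b i ≤ a j ∨ b j ≤ a i),
    ∑ j : Fin k, ENNReal.ofReal (|f (b j) - f (a j)| / l j)

/-- The `n`-th Bernstein polynomial of `f : [0,1] → ℝ`. -/
noncomputable def bern (n : ℕ) (f : ℝ → ℝ) (x : ℝ) : ℝ :=
  ∑ k ∈ Finset.range (n + 1),
    f ((k : ℝ) / n) * (n.choose k : ℝ) * x ^ k * (1 - x) ^ (n - k)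

/-- The `n`-th Kantorovich polynomial of `f : [0,1] → ℝ`. -/
noncomputable def kant (n : ℕ) (f : ℝ → ℝ) (x : ℝ) : ℝ :=
  ∑ k ∈ Finset.range (n + 1),
    (n.choose k : ℝ) * x ^ k * (1 - x) ^ (n - k) *
      ((n + 1) * ∫ t in ((k : ℝ) / (n + 1))..(((k : ℝ) + 1) / (n + 1)), f t)

/-- The class `𝔄`: bounded functions on `[0,1]` with one-sided limits at every interior
point, whose value there lies between the two one-sided limits. -/
def MemA (f : ℝ → ℝ) : Prop :=
  (∃ C : ℝ, ∀ x ∈ Set.Icc (0 : ℝ) 1, |f x| ≤ C) ∧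
  ∀ x ∈ Set.Ioo (0 : ℝ) 1, ∃ L R : ℝ,
    Tendsto f (𝓝[<] x) (𝓝 L) ∧ Tendsto f (𝓝[>] x) (𝓝 R) ∧
    min L R ≤ f x ∧ f x ≤ max L R

/-- The set `K_f` consisting of `0`, `1` and the points of continuity of `f : [0,1] → ℝ`. -/
def contPts (f : ℝ → ℝ) : Set ℝ :=
  {x ∈ Set.Icc (0 : ℝ) 1 | x = 0 ∨ x = 1 ∨ ContinuousWithinAt f (Set.Icc 0 1) x}

/-!
Partition points of `[0,1]` that are discontinuities of `f` can be removed one at a time.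
Let `v` be such a point, with one-sided limits `L` and `R`. With all other values of `f` on the
partition frozen, the Λ-sum is a convex function `G` of the value `t` taken at `v`; since `f v`
lies between `L` and `R`, `G (f v) ≤ max (G L) (G R)`. Say the maximum is `G R`. A function in
`𝔄` has only countably many (jump) discontinuities, so continuity points `c` accumulate at `v`
from the right. Moving `v` to such a `c` gives partitions with one point outside `K_f` fewer,
whose Λ-sums `G (f c)` tend to `G R` as `c → v⁺`.
-/

theorem countable_setOf_jump_gt (f : ℝ → ℝ) {ε : ℝ} (hε : 0 < ε) :
    {x | ∃ L R, Tendsto f (𝓝[<] x) (𝓝 L) ∧ Tendsto f (𝓝[>] x) (𝓝 R) ∧ ε < |L - R|}.Countable := by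
  set J := {x | ∃ L R, Tendsto f (𝓝[<] x) (𝓝 L) ∧ Tendsto f (𝓝[>] x) (𝓝 R) ∧ ε < |L - R|}
  refine (countable_setOfPred_isolated_right_within (s := J)).mono fun x hx => ?_
  refine ⟨hx, ?_⟩
  obtain ⟨-, R, -, hR, -⟩ := hx
  obtain ⟨q, hxq, hq⟩ := mem_nhdsGT_iff_exists_Ioo_subset.1
    (hR (Metric.closedBall_mem_nhds R (half_pos hε)))
  -- `f` stays within `ε / 2` of `R` on `(x, q)`, so no jump larger than `ε` occurs there
  have hJ : J ∩ Ioo x q = ∅ := by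
    refine eq_empty_of_forall_notMem fun y ⟨⟨L', R', hL', hR', hjump⟩, hy⟩ => ?_
    have hnear : ∀ᶠ z in 𝓝 y, |f z - R| ≤ ε / 2 := by
      filter_upwards [Ioo_mem_nhds hy.1 hy.2] with z hz
      simpa [Real.dist_eq] using hq hz
    have h₁ : |L' - R| ≤ ε / 2 :=
      le_of_tendsto (hL'.sub_const R).abs (nhdsWithin_le_nhds hnear)
    have h₂ : |R' - R| ≤ ε / 2 :=
      le_of_tendsto (hR'.sub_const R).abs (nhdsWithin_le_nhds hnear)
    linarith [abs_sub_le L' R R', abs_sub_comm R R']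
  have hJ' : J ∈ 𝓝[J ∩ Ioi x] x := mem_of_superset self_mem_nhdsWithin inter_subset_left
  have hIoo : Ioo x q ∈ 𝓝[J ∩ Ioi x] x :=
    nhdsWithin_mono _ inter_subset_right (Ioo_mem_nhdsGT hxq)
  exact empty_mem_iff_bot.1 (hJ ▸ inter_mem hJ' hIoo)

theorem countable_setOf_jump (f : ℝ → ℝ) :
    {x | ∃ L R, Tendsto f (𝓝[<] x) (𝓝 L) ∧ Tendsto f (𝓝[>] x) (𝓝 R) ∧ L ≠ R}.Countable := by
  refine (countable_iUnion fun n : ℕ =>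
    countable_setOf_jump_gt f (Nat.one_div_pos_of_nat (n := n))).mono ?_
  rintro x ⟨L, R, hL, hR, hLR⟩
  obtain ⟨n, hn⟩ := exists_nat_one_div_lt (abs_pos.2 (sub_ne_zero.2 hLR))
  exact mem_iUnion.2 ⟨n, L, R, hL, hR, hn⟩

theorem MemA.continuousAt_of_not_jump {f : ℝ → ℝ} (hf : MemA f) {x : ℝ} (hx : x ∈ Ioo 0 1)
    (hjump : ¬ ∃ L R, Tendsto f (𝓝[<] x) (𝓝 L) ∧ Tendsto f (𝓝[>] x) (𝓝 R) ∧ L ≠ R) :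
    ContinuousAt f x := by
  obtain ⟨L, R, hL, hR, hmin, hmax⟩ := hf.2 x hx
  obtain rfl : L = R := by_contra fun h => hjump ⟨L, R, hL, hR, h⟩
  obtain rfl : f x = L := le_antisymm (by simpa using hmax) (by simpa using hmin)
  exact continuousAt_iff_continuous_left'_right'.2 ⟨hL, hR⟩

theorem MemA.exists_mem_contPts_Ioo {f : ℝ → ℝ} (hf : MemA f) {a b : ℝ} (ha : 0 ≤ a)
    (hab : a < b) (hb : b ≤ 1) : ∃ c ∈ contPts f, c ∈ Ioo a b := by
  obtain ⟨c, hc, hjump⟩ : (Ioo a b \ {x | ∃ L R, Tendsto f (𝓝[<] x) (𝓝 L) ∧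
      Tendsto f (𝓝[>] x) (𝓝 R) ∧ L ≠ R}).Nonempty :=
    sdiff_nonempty.2 fun h =>
      (Cardinal.Real.Ioo_countable_iff.1 ((countable_setOf_jump f).mono h)).not_gt hab
  have hc01 : c ∈ Ioo 0 1 := ⟨ha.trans_lt hc.1, hc.2.trans_le hb⟩
  exact ⟨c, ⟨Ioo_subset_Icc_self hc01, Or.inr <| Or.inr <|
    (hf.continuousAt_of_not_jump hc01 hjump).continuousWithinAt⟩, hc⟩

theorem MemA.nhdsGT_inf_contPts_neBot {f : ℝ → ℝ} (hf : MemA f) {v : ℝ} (hv : v ∈ Ico 0 1) :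
    (𝓝[>] v ⊓ 𝓟 (contPts f)).NeBot := by
  refine inf_principal_neBot_iff.2 fun U hU => ?_
  obtain ⟨u, hvu, hU⟩ := mem_nhdsGT_iff_exists_Ioo_subset.1 hU
  obtain ⟨c, hc, hcv, hcu⟩ := hf.exists_mem_contPts_Ioo hv.1 (lt_min hvu hv.2) (min_le_right _ _)
  exact ⟨c, hU ⟨hcv, hcu.trans_le (min_le_left _ _)⟩, hc⟩

theorem MemA.nhdsLT_inf_contPts_neBot {f : ℝ → ℝ} (hf : MemA f) {v : ℝ} (hv : v ∈ Ioc 0 1) :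
    (𝓝[<] v ⊓ 𝓟 (contPts f)).NeBot := by
  refine inf_principal_neBot_iff.2 fun U hU => ?_
  obtain ⟨u, huv, hU⟩ := mem_nhdsLT_iff_exists_Ioo_subset.1 hU
  obtain ⟨c, hc, hcu, hcv⟩ := hf.exists_mem_contPts_Ioo (le_max_right _ _) (max_lt huv hv.1) hv.2
  exact ⟨c, hU ⟨(le_max_left _ _).trans_lt hcu, hcv⟩, hc⟩

theorem mem_Ioo_of_notMem_contPts {f : ℝ → ℝ} {x : ℝ} (hx : x ∈ Icc 0 1)
    (hxK : x ∉ contPts f) : x ∈ Ioo 0 1 :=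
  ⟨hx.1.lt_of_ne fun h => hxK ⟨hx, Or.inl h.symm⟩,
    hx.2.lt_of_ne fun h => hxK ⟨hx, Or.inr (Or.inl h)⟩⟩

theorem piecewise_const_mem_segment {𝕜 ι E : Type*} [Semiring 𝕜] [PartialOrder 𝕜]
    [AddCommMonoid E] [Module 𝕜 E] (s : Set ι) [DecidablePred (· ∈ s)] (y : ι → E) {p q t : E}
    (ht : t ∈ segment 𝕜 p q) :
    s.piecewise (fun _ => t) y ∈
      segment 𝕜 (s.piecewise (fun _ => p) y) (s.piecewise (fun _ => q) y) := by
  obtain ⟨a, b, ha, hb, hab, rfl⟩ := ht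
  refine ⟨a, b, ha, hb, hab, funext fun j => ?_⟩
  by_cases hj : j ∈ s <;> simp [hj, ← add_smul, hab]

theorem continuous_piecewise_const {ι α : Type*} [TopologicalSpace α] (s : Set ι)
    [DecidablePred (· ∈ s)] (y : ι → α) : Continuous fun t : α => s.piecewise (fun _ => t) y :=
  continuous_pi fun j => by by_cases hj : j ∈ s <;> simp [hj, continuous_id', continuous_const]

theorem Monotone.eventually_monotone_piecewise {ι α : Type*} [Preorder ι] [Finite ι]
    [LinearOrder α] [TopologicalSpace α] [OrderTopology α] {x : ι → α} (hx : Monotone x) (v : α)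
    [DecidablePred (· ∈ {j | x j = v})] :
    ∀ᶠ c in 𝓝 v, Monotone ({j | x j = v}.piecewise (fun _ => c) x) := by
  have hside : ∀ᶠ c in 𝓝 v, ∀ j, (x j < v → x j < c) ∧ (v < x j → c < x j) :=
    eventually_all.2 fun j => (eventually_imp_distrib_left.2 eventually_gt_nhds).and
      (eventually_imp_distrib_left.2 eventually_lt_nhds)
  filter_upwards [hside] with c hc i j hij
  simp only [Set.piecewise, mem_ofPred_eq]
  split_ifs with hi hj hj
  · exact le_rfl
  · exact ((hc j).2 ((hi ▸ hx hij).lt_of_ne (Ne.symm hj))).le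
  · exact ((hc i).1 ((hj ▸ hx hij).lt_of_ne hi)).le
  · exact hx hij

theorem card_filter_piecewise_lt {ι α : Type*} [Fintype ι] {K : Set α} {x : ι → α} {s : Set ι}
    [DecidablePred (· ∈ s)] [DecidablePred (· ∈ K)] {j₀ : ι} (hj₀s : j₀ ∈ s) (hj₀ : x j₀ ∉ K)
    {c : α} (hc : c ∈ K) :
    (Finset.univ.filter fun j => s.piecewise (fun _ => c) x j ∉ K).card <
      (Finset.univ.filter fun j => x j ∉ K).card := by
  refine Finset.card_lt_card ((Finset.ssubset_iff_of_subset ?_).2 ⟨j₀, ?_, ?_⟩)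
  · intro j
    by_cases hj : j ∈ s <;> simp [hj, hc]
  · simpa using hj₀
  · simp [hj₀s, hc]

noncomputable def lamSum (l : ℕ → ℝ) {m : ℕ} (β : Equiv.Perm (Fin m)) (y : Fin (m + 1) → ℝ) :
    ℝ :=
  ∑ j : Fin m, |y j.succ - y j.castSucc| / l (β j)

section lamSum

variable {l : ℕ → ℝ} {m : ℕ} (β : Equiv.Perm (Fin m))

theorem convexOn_lamSum (hl : ∀ n, 0 ≤ l n) : ConvexOn ℝ univ (lamSum l β) := by
  refine ⟨convex_univ, fun y _ z _ a b ha hb _ => ?_⟩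
  simp only [lamSum, smul_eq_mul, Finset.mul_sum, ← Finset.sum_add_distrib, Pi.add_apply,
    Pi.smul_apply]
  refine Finset.sum_le_sum fun j _ => ?_
  have key : |a * y j.succ + b * z j.succ - (a * y j.castSucc + b * z j.castSucc)| ≤
      a * |y j.succ - y j.castSucc| + b * |z j.succ - z j.castSucc| := by
    calc _ = |a * (y j.succ - y j.castSucc) + b * (z j.succ - z j.castSucc)| := by ring_nf
      _ ≤ _ := by
        grw [abs_add_le, abs_mul, abs_mul, abs_of_nonneg ha, abs_of_nonneg hb]
  calc _ ≤ (a * |y j.succ - y j.castSucc| + b * |z j.succ - z j.castSucc|) / l (β j) :=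
        div_le_div_of_nonneg_right key (hl _)
    _ = _ := by ring

theorem continuous_lamSum (l : ℕ → ℝ) : Continuous (lamSum l β) := by
  unfold lamSum
  fun_prop

theorem ofReal_lamSum (hl : ∀ n, 0 ≤ l n) (y : Fin (m + 1) → ℝ) :
    ENNReal.ofReal (lamSum l β y) =
      ∑ j : Fin m, ENNReal.ofReal (|y j.succ - y j.castSucc| / l (β j)) :=
  ENNReal.ofReal_sum_of_nonneg fun _ _ => div_nonneg (abs_nonneg _) (hl _)

end lamSum

section lamVarOn

variable {l : ℕ → ℝ} {f : ℝ → ℝ}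

theorem ofReal_lamSum_le_lamVarOn (hl : ∀ n, 0 ≤ l n) {K : Set ℝ} {m : ℕ}
    {x : Fin (m + 1) → ℝ} (hx : Monotone x) (hxK : ∀ j, x j ∈ K) (β : Equiv.Perm (Fin m)) :
    ENNReal.ofReal (lamSum l β (f ∘ x)) ≤ lamVarOn l f K := by
  rw [ofReal_lamSum β hl]
  exact le_iSup_of_le m <| le_iSup_of_le x <| le_iSup_of_le hx <| le_iSup_of_le hxK <|
    le_iSup_of_le β le_rfl

theorem lamVarOn_le (hl : ∀ n, 0 ≤ l n) {K : Set ℝ} {V : ℝ≥0∞}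
    (h : ∀ (m : ℕ) (x : Fin (m + 1) → ℝ), Monotone x → (∀ j, x j ∈ K) →
      ∀ β : Equiv.Perm (Fin m), ENNReal.ofReal (lamSum l β (f ∘ x)) ≤ V) :
    lamVarOn l f K ≤ V :=
  iSup_le fun m => iSup_le fun x => iSup_le fun hx => iSup_le fun hxK => iSup_le fun β => by
    have := h m x hx hxK β
    rwa [ofReal_lamSum β hl] at this

theorem lamVarOn_mono {K K' : Set ℝ} (hKK' : K ⊆ K') : lamVarOn l f K ≤ lamVarOn l f K' :=
  iSup_mono fun _ => iSup_mono fun _ => iSup_mono fun _ => iSup_le fun hxK =>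
    le_iSup_of_le (fun j => hKK' (hxK j)) le_rfl

end lamVarOn

open Classical in
theorem MemA.ofReal_lamSum_le_of_piecewise {l : ℕ → ℝ} (hl : ∀ n, 0 ≤ l n) {f : ℝ → ℝ}
    (hf : MemA f) {m : ℕ} (β : Equiv.Perm (Fin m)) {x : Fin (m + 1) → ℝ} (hx : Monotone x)
    {v : ℝ} (hv : v ∈ Ioo 0 1) {V : ℝ≥0∞}
    (hV : ∀ c ∈ contPts f, Monotone ({j | x j = v}.piecewise (fun _ => c) x) →
      ENNReal.ofReal (lamSum l β (f ∘ {j | x j = v}.piecewise (fun _ => c) x)) ≤ V) :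
    ENNReal.ofReal (lamSum l β (f ∘ x)) ≤ V := by
  set s := {j | x j = v}
  obtain ⟨L, R, hL, hR, hmin, hmax⟩ := hf.2 v hv
  set G : ℝ → ℝ := fun t => lamSum l β (s.piecewise (fun _ => t) (f ∘ x))
  have hG : Continuous G := (continuous_lamSum β l).comp (continuous_piecewise_const s _)
  have hfx : f ∘ x = s.piecewise (fun _ => f v) (f ∘ x) := by
    funext j
    by_cases hj : x j = v <;> simp [s, hj]
  -- `G (f c) ≤ V` for continuity points `c` near `v`; pass to the limit along such `c`
  have hlim : ∀ (F : Filter ℝ) [F.NeBot] {r : ℝ}, F ≤ 𝓝 v → F ≤ 𝓟 (contPts f) →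
      Tendsto f F (𝓝 r) → ENNReal.ofReal (G r) ≤ V := by
    intro F _ r hFv hFK hfr
    refine le_of_tendsto ((ENNReal.continuous_ofReal.comp hG).continuousAt.tendsto.comp hfr) ?_
    filter_upwards [hFv (hx.eventually_monotone_piecewise v), hFK (mem_principal_self _)]
      with c hmono hc
    have hcomp : f ∘ s.piecewise (fun _ => c) x = s.piecewise (fun _ => f c) (f ∘ x) := by
      funext j
      by_cases hj : j ∈ s <;> simp [hj]
    show ENNReal.ofReal (lamSum l β _) ≤ V
    rw [← hcomp]
    exact hV c hc hmono
  have hGv : G (f v) ≤ max (G L) (G R) :=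
    (convexOn_lamSum β hl).le_max_of_mem_segment (mem_univ _) (mem_univ _)
      (piecewise_const_mem_segment s _ (segment_eq_uIcc L R ▸ ⟨hmin, hmax⟩))
  rw [hfx]
  rcases le_max_iff.1 hGv with h | h
  · have := hf.nhdsLT_inf_contPts_neBot (Ioo_subset_Ioc_self hv)
    exact (ENNReal.ofReal_le_ofReal h).trans <| hlim _ (inf_le_left.trans nhdsWithin_le_nhds)
      inf_le_right (hL.mono_left inf_le_left)
  · have := hf.nhdsGT_inf_contPts_neBot (Ioo_subset_Ico_self hv)
    exact (ENNReal.ofReal_le_ofReal h).trans <| hlim _ (inf_le_left.trans nhdsWithin_le_nhds)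
      inf_le_right (hR.mono_left inf_le_left)

open Classical in
theorem MemA.ofReal_lamSum_le_lamVarOn_contPts {l : ℕ → ℝ} (hl : ∀ n, 0 ≤ l n) {f : ℝ → ℝ}
    (hf : MemA f) {m : ℕ} (β : Equiv.Perm (Fin m)) (x : Fin (m + 1) → ℝ) (hx : Monotone x)
    (hx01 : ∀ j, x j ∈ Icc 0 1) :
    ENNReal.ofReal (lamSum l β (f ∘ x)) ≤ lamVarOn l f (contPts f) := by
  induction hn : (Finset.univ.filter fun j => x j ∉ contPts f).card using Nat.strong_induction_on
    generalizing x with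
  | _ n ih =>
    by_cases hgood : ∀ j, x j ∈ contPts f
    · exact ofReal_lamSum_le_lamVarOn hl hx hgood β
    obtain ⟨j₀, hj₀⟩ := not_forall.1 hgood
    refine hf.ofReal_lamSum_le_of_piecewise hl β hx (mem_Ioo_of_notMem_contPts (hx01 j₀) hj₀)
      fun c hc hmono => ih _ ?_ _ hmono (fun j => ?_) rfl
    · exact hn ▸ card_filter_piecewise_lt (s := {j | x j = x j₀}) rfl hj₀ hc
    · by_cases hj : x j = x j₀ <;> simp [hj, hc.1, hx01 j]

/-- If `Λ` is a Λ-sequence and `f ∈ 𝔄`, then `V_Λ(f, K_f) = V_Λ(f)`. -/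
theorem lamVarOn_contPts (l : ℕ → ℝ) (hl : IsLambdaSeq l)
    (f : ℝ → ℝ) (hf : MemA f) :
    lamVarOn l f (contPts f) = lamVar l f := by
  have hl₀ : ∀ n, 0 ≤ l n := fun n => (hl.2.1 n).le
  exact le_antisymm (lamVarOn_mono fun x hx => hx.1) <|
    lamVarOn_le hl₀ fun _ x hx hx01 β => hf.ofReal_lamSum_le_lamVarOn_contPts hl₀ β x hx hx01
end

section
/- Let Λ be a proper Λ-sequence. If f and f_k (k ∈ ℕ) are functions [0,1] → ℝ of bounded Λ-variation, each f_k is continuous in Λ-variation, and ‖f_k − f‖_Λ → 0 as k → ∞, then f is continuous in Λ-variation; moreover if in addition each f_k is continuous then so is f. Hence the functions continuous in Λ-variation, and the continuous functions continuous in Λ-variation, form closed subspaces of the space of functions of bounded Λ-variation with the norm ‖·‖_Λ. -/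
open Filter Set MeasureTheory
open scoped ENNReal Topology

/-!
Shifting a Λ-sequence to `Λ_(m)` only enlarges the weights, so it can only decrease the
Λ-variation. Hence `V_{Λ_(m)}(f) ≤ V_Λ(f_k - f) + V_{Λ_(m)}(f_k)`: first choose `k` to make
the first term small, then `m` for the second. For continuity, the single gap `[0, x]` weighted
by `λ₁` gives `|g x| ≤ |g 0| + λ₁ V_Λ(g)` for every `g`, so convergence in `‖·‖_Λ` is uniform
on `[0,1]`.
-/

section LamVarOn

variable {l l' : ℕ → ℝ} {f g h : ℝ → ℝ} {K : Set ℝ}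

lemma lamVarOn_le_iff {c : ℝ≥0∞} :
    lamVarOn l f K ≤ c ↔ ∀ (m : ℕ) (x : Fin (m + 1) → ℝ), Monotone x → (∀ j, x j ∈ K) →
      ∀ β : Equiv.Perm (Fin m),
        ∑ j : Fin m, ENNReal.ofReal (|f (x j.succ) - f (x j.castSucc)| / l (β j)) ≤ c := by
  simp only [lamVarOn, iSup_le_iff]

lemma sum_le_lamVarOn {m : ℕ} {x : Fin (m + 1) → ℝ} (hx : Monotone x) (hxK : ∀ j, x j ∈ K)
    (β : Equiv.Perm (Fin m)) :
    ∑ j : Fin m, ENNReal.ofReal (|f (x j.succ) - f (x j.castSucc)| / l (β j)) ≤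
      lamVarOn l f K :=
  lamVarOn_le_iff.1 le_rfl m x hx hxK β

lemma lamVarOn_le_add
    (hfgh : ∀ a ∈ K, ∀ b ∈ K, |f b - f a| ≤ |g b - g a| + |h b - h a|) :
    lamVarOn l f K ≤ lamVarOn l g K + lamVarOn l h K := by
  refine lamVarOn_le_iff.2 fun m x hx hxK β => ?_
  refine (Finset.sum_le_sum fun j _ => ?_).trans <| Finset.sum_add_distrib.trans_le <|
    add_le_add (sum_le_lamVarOn hx hxK β) (sum_le_lamVarOn hx hxK β)
  simp only [div_eq_mul_inv, ENNReal.ofReal_mul (abs_nonneg _), ← add_mul]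
  gcongr
  exact (ENNReal.ofReal_le_ofReal (hfgh _ (hxK _) _ (hxK _))).trans ENNReal.ofReal_add_le

lemma lamVarOn_le_of_seq_le (hpos : ∀ n, 0 < l n) (hle : l ≤ l') :
    lamVarOn l' f K ≤ lamVarOn l f K :=
  lamVarOn_le_iff.2 fun _ _ hx hxK β => (Finset.sum_le_sum fun _ _ =>
    ENNReal.ofReal_le_ofReal <| div_le_div_of_nonneg_left (abs_nonneg _) (hpos _) (hle _)).trans
      (sum_le_lamVarOn hx hxK β)

lemma ofReal_abs_sub_div_le_lamVarOn {a b : ℝ} (ha : a ∈ K) (hb : b ∈ K) (hab : a ≤ b) :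
    ENNReal.ofReal (|f b - f a| / l 0) ≤ lamVarOn l f K := by
  simpa using sum_le_lamVarOn (f := f) (l := l) (x := ![a, b])
    (Fin.monotone_iff_le_succ.2 fun i => by fin_cases i; simpa using hab)
    (fun j => by fin_cases j <;> simpa) (Equiv.refl _)

end LamVarOn

section LamVar

variable {l : ℕ → ℝ} {f : ℝ → ℝ}

lemma lamVar_shift_le (hmono : Monotone l) (hpos : ∀ n, 0 < l n) (m : ℕ) :
    lamVar (fun n => l (n + m)) f ≤ lamVar l f :=
  lamVarOn_le_of_seq_le hpos fun n => hmono (Nat.le_add_right n m)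

lemma ofReal_abs_le_mul_lamNorm (h0 : 0 < l 0) {x : ℝ} (hx : x ∈ Icc (0 : ℝ) 1) :
    ENNReal.ofReal |f x| ≤ (1 + ENNReal.ofReal (l 0)) * lamNorm l f := by
  have hincr : ENNReal.ofReal |f x - f 0| ≤ ENNReal.ofReal (l 0) * lamVar l f := by
    rw [← mul_div_cancel₀ |f x - f 0| h0.ne', ENNReal.ofReal_mul h0.le]
    gcongr
    exact ofReal_abs_sub_div_le_lamVarOn ⟨le_rfl, zero_le_one⟩ hx hx.1
  calc ENNReal.ofReal |f x|
      ≤ ENNReal.ofReal |f 0| + ENNReal.ofReal |f x - f 0| :=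
        (ENNReal.ofReal_le_ofReal (by simpa using abs_add_le (f 0) (f x - f 0))).trans
          ENNReal.ofReal_add_le
    _ ≤ ENNReal.ofReal |f 0| + ENNReal.ofReal (l 0) * lamVar l f := by gcongr
    _ ≤ (1 + ENNReal.ofReal (l 0)) * lamNorm l f := by
        rw [add_mul, one_mul, lamNorm]
        gcongr
        exacts [le_add_self, le_self_add]

lemma tendstoUniformlyOn_of_tendsto_lamNorm_sub {ι : Type*} {p : Filter ι} {F : ι → ℝ → ℝ}
    (h0 : 0 < l 0) (hconv : Tendsto (fun k => lamNorm l (fun x => F k x - f x)) p (𝓝 0)) :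
    TendstoUniformlyOn F f p (Icc 0 1) := by
  have hbound : Tendsto (fun k => (1 + ENNReal.ofReal (l 0)) * lamNorm l (fun x => F k x - f x))
      p (𝓝 0) := by
    simpa using ENNReal.Tendsto.const_mul hconv (.inr (by simp))
  refine EMetric.tendstoUniformlyOn_iff.2 fun ε hε => ?_
  filter_upwards [(tendsto_order.1 hbound).2 ε hε] with k hk x hx
  rw [edist_dist, Real.dist_eq, abs_sub_comm]
  exact (ofReal_abs_le_mul_lamNorm h0 hx).trans_lt hk

lemma ContInLamVar.of_tendsto_lamVar_sub {ι : Type*} {p : Filter ι} [p.NeBot]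
    {F : ι → ℝ → ℝ} (hmono : Monotone l) (hpos : ∀ n, 0 < l n)
    (hFc : ∀ k, ContInLamVar l (F k))
    (hconv : Tendsto (fun k => lamVar l (fun x => F k x - f x)) p (𝓝 0)) :
    ContInLamVar l f := by
  refine ENNReal.tendsto_nhds_zero.2 fun ε hε => ?_
  have hε2 : 0 < ε / 2 := ENNReal.half_pos hε.ne'
  obtain ⟨k, hk⟩ := (ENNReal.tendsto_nhds_zero.1 hconv _ hε2).exists
  filter_upwards [ENNReal.tendsto_nhds_zero.1 (hFc k) _ hε2] with m hm
  have hsplit : lamVar (fun n => l (n + m)) f ≤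
      lamVar (fun n => l (n + m)) (fun x => F k x - f x) + lamVar (fun n => l (n + m)) (F k) :=
    lamVarOn_le_add fun a _ b _ => by
      have hdiff : f b - f a = (F k b - F k a) - ((F k b - f b) - (F k a - f a)) := by ring
      rw [hdiff, add_comm]
      exact abs_sub _ _
  calc lamVar (fun n => l (n + m)) f
      ≤ lamVar l (fun x => F k x - f x) + lamVar (fun n => l (n + m)) (F k) :=
        hsplit.trans (add_le_add (lamVar_shift_le hmono hpos m) le_rfl)
    _ ≤ ε / 2 + ε / 2 := add_le_add hk hm
    _ = ε := ENNReal.add_halves ε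

end LamVar

theorem contInLamVar_closed_general (l : ℕ → ℝ) (hl : IsProperLambdaSeq l)
    (F : ℕ → ℝ → ℝ) (f : ℝ → ℝ)
    (hFc : ∀ k, ContInLamVar l (F k))
    (hconv : Tendsto (fun k => lamNorm l (fun x => F k x - f x)) atTop (𝓝 0)) :
    ContInLamVar l f ∧
    ((∀ k, ContinuousOn (F k) (Set.Icc 0 1)) → ContinuousOn f (Set.Icc 0 1)) := by
  obtain ⟨⟨hmono, hpos, -⟩, -⟩ := hl
  have hvar : Tendsto (fun k => lamVar l (fun x => F k x - f x)) atTop (𝓝 0) :=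
    tendsto_of_tendsto_of_tendsto_of_le_of_le tendsto_const_nhds hconv (fun _ => zero_le)
      fun _ => le_self_add
  refine ⟨.of_tendsto_lamVar_sub hmono hpos hFc hvar, fun hcont => ?_⟩
  exact (tendstoUniformlyOn_of_tendsto_lamNorm_sub (hpos 0) hconv).continuousOn
    (Frequently.of_forall hcont)

/-- If `Λ` is a proper Λ-sequence, `f, fₖ ∈ ΛBV`, each `fₖ` is continuous in
Λ-variation, and `‖fₖ - f‖_Λ → 0`, then `f` is continuous in Λ-variation; moreover if each
`fₖ` is continuous, so is `f`. Hence `ΛBV_c` and `CΛBV_c` are closed subspaces of `ΛBV`. -/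
theorem contInLamVar_closed (l : ℕ → ℝ) (hl : IsProperLambdaSeq l)
    (F : ℕ → ℝ → ℝ) (f : ℝ → ℝ)
    (hF : ∀ k, lamVar l (F k) < ⊤) (hf : lamVar l f < ⊤)
    (hFc : ∀ k, ContInLamVar l (F k))
    (hconv : Tendsto (fun k => lamNorm l (fun x => F k x - f x)) atTop (𝓝 0)) :
    ContInLamVar l f ∧
    ((∀ k, ContinuousOn (F k) (Set.Icc 0 1)) → ContinuousOn f (Set.Icc 0 1)) :=
  contInLamVar_closed_general l hl F f hFc hconv
end
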